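/- arXiv:2009.03841 — 5 statements merged into one kernel-verified Lean document; each statement's English description precedes it below -/
import Mathlib

section
/- Let m > 0, s0 > 0, α ∈ (0,1), κ = √(2 s0/m), ν = α √(m s0/2) and g(y) = (1 + exp(κ y))^{-1}. Let I ⊆ ℝ be an open interval and let v₁ : I × ℝ → ℝ be such that for all (t,x) ∈ I × ℝ the partial derivatives ∂_t v₁, ∂_x v₁ and ∂²_{xx} v₁ exist and satisfy ∂_t v₁(t,x) = (m/2) ∂²_{xx} v₁(t,x) + m (g'(x − ν t)/g(x − ν t)) ∂_x v₁(t,x). Define v(t,x) = g(x − ν t) v₁(t,x). Then for all (t,x) ∈ I × ℝ, ∂_t v(t,x) = (m/2) ∂²_{xx} v(t,x) + s0 v(t,x) (1 − g(x − ν t)) (2 g(x − ν t) − 1 + α). -/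
/-!
Writing `v = g(x - ν t) v₁` is a Doob `h`-transform: for any twice differentiable, nonvanishing `g`,
the drift `m g'/g` in the equation for `v₁` cancels against the cross term `m g' ∂ₓv₁` of
`∂ₓₓ(g v₁)`, leaving `∂ₜv = (m/2) ∂ₓₓv - (ν g' + (m/2) g'') v₁`. The logistic profile solves
`g' = -κ g (1 - g)`, so `g'' = κ² g (1 - g) (1 - 2g)`, and the choice of `κ, ν` gives
`m κ² = 2 s0` and `ν κ = α s0`, which turns the potential term into the stated reaction term.
-/

open Real

section LogisticProfile

variable {κ : ℝ} {g : ℝ → ℝ}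

theorem hasDerivAt_of_eq_inv_one_add_exp (hg : ∀ y, g y = (1 + exp (κ * y))⁻¹) (y : ℝ) :
    HasDerivAt g (-κ * g y * (1 - g y)) y := by
  have hpos : 0 < 1 + exp (κ * y) := by positivity
  rw [show g = fun z => (1 + exp (κ * z))⁻¹ from funext hg]
  refine ((((hasDerivAt_id y).const_mul κ).exp).const_add 1).inv hpos.ne' |>.congr_deriv ?_
  simp only [id]
  field_simp
  ring

theorem hasDerivAt_deriv_of_logistic (hg : ∀ y, HasDerivAt g (-κ * g y * (1 - g y)) y) (y : ℝ) :
    HasDerivAt (deriv g) (κ ^ 2 * g y * (1 - g y) * (1 - 2 * g y)) y := by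
  rw [show deriv g = fun z => -κ * g z * (1 - g z) from funext fun z => (hg z).deriv]
  refine ((hg y).const_mul (-κ)).mul ((hg y).const_sub 1) |>.congr_deriv ?_
  ring

end LogisticProfile

section TravelingFrame

variable {g : ℝ → ℝ} {c ν t x : ℝ}

theorem deriv_comp_sub_const_mul {f : ℝ → ℝ} (hg : Differentiable ℝ g) (hf : Differentiable ℝ f) :
    deriv (fun y => g (y - c) * f y) = fun y => deriv g (y - c) * f y + g (y - c) * deriv f y :=
  funext fun y => (((hg _).hasDerivAt.comp_sub_const y c).mul (hf y).hasDerivAt).deriv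

theorem hasDerivAt_deriv_comp_sub_const_mul {f : ℝ → ℝ} (hg : Differentiable ℝ g)
    (hf : Differentiable ℝ f) (hg' : DifferentiableAt ℝ (deriv g) (x - c))
    (hf' : DifferentiableAt ℝ (deriv f) x) :
    HasDerivAt (deriv fun y => g (y - c) * f y)
      (deriv (deriv g) (x - c) * f x + 2 * deriv g (x - c) * deriv f x
        + g (x - c) * deriv (deriv f) x) x := by
  rw [deriv_comp_sub_const_mul hg hf]
  refine ((hg'.hasDerivAt.comp_sub_const x c).mul (hf x).hasDerivAt).add
    (((hg _).hasDerivAt.comp_sub_const x c).mul hf'.hasDerivAt) |>.congr_deriv ?_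
  ring

theorem hasDerivAt_comp_const_sub_mul_mul {f : ℝ → ℝ} (hg : DifferentiableAt ℝ g (x - ν * t))
    (hf : DifferentiableAt ℝ f t) :
    HasDerivAt (fun τ => g (x - ν * τ) * f τ)
      (-ν * deriv g (x - ν * t) * f t + g (x - ν * t) * deriv f t) t := by
  have hshift : HasDerivAt (fun τ => x - ν * τ) (-ν) t := by
    simpa using ((hasDerivAt_id t).const_mul ν).const_sub x
  refine (hg.hasDerivAt.comp t hshift).mul hf.hasDerivAt |>.congr_deriv ?_
  rw [Function.comp_apply]
  ring

theorem deriv_travelingWave_mul_of_pde (m : ℝ) {u : ℝ → ℝ → ℝ} (hg : Differentiable ℝ g)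
    (hg' : DifferentiableAt ℝ (deriv g) (x - ν * t)) (hg0 : g (x - ν * t) ≠ 0)
    (hut : DifferentiableAt ℝ (fun τ => u τ x) t) (hux : Differentiable ℝ (fun y => u t y))
    (huxx : DifferentiableAt ℝ (deriv fun y => u t y) x)
    (hpde : deriv (fun τ => u τ x) t
      = m / 2 * deriv (deriv fun y => u t y) x
        + m * (deriv g (x - ν * t) / g (x - ν * t)) * deriv (fun y => u t y) x) :
    deriv (fun τ => g (x - ν * τ) * u τ x) t
      = m / 2 * deriv (deriv fun y => g (y - ν * t) * u t y) x
        - (ν * deriv g (x - ν * t) + m / 2 * deriv (deriv g) (x - ν * t)) * u t x := by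
  rw [(hasDerivAt_comp_const_sub_mul_mul (hg _) hut).deriv,
    (hasDerivAt_deriv_comp_sub_const_mul hg hux hg' huxx).deriv, hpde]
  field_simp
  ring

end TravelingFrame

theorem tracer_pde_transfer_general
    (m s0 α : ℝ) (hm : 0 < m) (hs0 : 0 < s0)
    (κ ν : ℝ) (hκ : κ = Real.sqrt (2 * s0 / m)) (hν : ν = α * Real.sqrt (m * s0 / 2))
    (g : ℝ → ℝ) (hg : ∀ y, g y = (1 + Real.exp (κ * y))⁻¹)
    (I : Set ℝ)
    (v₁ : ℝ → ℝ → ℝ)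
    (hvt : ∀ t ∈ I, ∀ x : ℝ, DifferentiableAt ℝ (fun τ => v₁ τ x) t)
    (hvx : ∀ t ∈ I, ∀ x : ℝ, DifferentiableAt ℝ (fun y => v₁ t y) x)
    (hvxx : ∀ t ∈ I, ∀ x : ℝ, DifferentiableAt ℝ (deriv (fun y => v₁ t y)) x)
    (hpde : ∀ t ∈ I, ∀ x : ℝ,
      deriv (fun τ => v₁ τ x) t
        = m / 2 * deriv (deriv (fun y => v₁ t y)) x
          + m * (deriv g (x - ν * t) / g (x - ν * t)) * deriv (fun y => v₁ t y) x)
    (v : ℝ → ℝ → ℝ) (hv : ∀ t x, v t x = g (x - ν * t) * v₁ t x) :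
    ∀ t ∈ I, ∀ x : ℝ,
      DifferentiableAt ℝ (fun τ => v τ x) t ∧
      (∀ y, DifferentiableAt ℝ (fun y' => v t y') y) ∧
      DifferentiableAt ℝ (deriv (fun y' => v t y')) x ∧
      deriv (fun τ => v τ x) t
        = m / 2 * deriv (deriv (fun y' => v t y')) x
          + s0 * v t x * (1 - g (x - ν * t)) * (2 * g (x - ν * t) - 1 + α) := by
  intro t ht x
  obtain rfl : v = fun τ y => g (y - ν * τ) * v₁ τ y := funext₂ hv
  have hm_κ_sq : m * κ ^ 2 = 2 * s0 := by
    rw [hκ, sq_sqrt (by positivity)]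
    field_simp
  have hν_mul_κ : ν * κ = α * s0 := by
    rw [hν, hκ, mul_assoc, ← sqrt_mul (by positivity),
      show m * s0 / 2 * (2 * s0 / m) = s0 ^ 2 by field_simp, sqrt_sq hs0.le]
  have hg' := hasDerivAt_of_eq_inv_one_add_exp hg
  have hg'' := hasDerivAt_deriv_of_logistic hg'
  have hgd : Differentiable ℝ g := fun y => (hg' y).differentiableAt
  have hg0 : g (x - ν * t) ≠ 0 := by rw [hg]; positivity
  refine ⟨(hasDerivAt_comp_const_sub_mul_mul (hgd _) (hvt t ht x)).differentiableAt,
    fun y => ((hg' _).comp_sub_const y _).mul (hvx t ht y).hasDerivAt |>.differentiableAt,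
    (hasDerivAt_deriv_comp_sub_const_mul hgd (hvx t ht) (hg'' _).differentiableAt
      (hvxx t ht x)).differentiableAt, ?_⟩
  rw [deriv_travelingWave_mul_of_pde m hgd (hg'' _).differentiableAt hg0 (hvt t ht x) (hvx t ht)
    (hvxx t ht x) (hpde t ht x), (hg' _).deriv, (hg'' _).deriv]
  linear_combination (g (x - ν * t) * (1 - g (x - ν * t)) * v₁ t x) * hν_mul_κ
    - (g (x - ν * t) * (1 - g (x - ν * t)) * (1 - 2 * g (x - ν * t)) * v₁ t x / 2) * hm_κ_sq

theorem tracer_pde_transfer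
    (m s0 α : ℝ) (hm : 0 < m) (hs0 : 0 < s0) (hα : α ∈ Set.Ioo (0 : ℝ) 1)
    (κ ν : ℝ) (hκ : κ = Real.sqrt (2 * s0 / m)) (hν : ν = α * Real.sqrt (m * s0 / 2))
    (g : ℝ → ℝ) (hg : ∀ y, g y = (1 + Real.exp (κ * y))⁻¹)
    (I : Set ℝ) (hIopen : IsOpen I) (hIconn : I.OrdConnected)
    (v₁ : ℝ → ℝ → ℝ)
    (hvt : ∀ t ∈ I, ∀ x : ℝ, DifferentiableAt ℝ (fun τ => v₁ τ x) t)
    (hvx : ∀ t ∈ I, ∀ x : ℝ, DifferentiableAt ℝ (fun y => v₁ t y) x)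
    (hvxx : ∀ t ∈ I, ∀ x : ℝ, DifferentiableAt ℝ (deriv (fun y => v₁ t y)) x)
    (hpde : ∀ t ∈ I, ∀ x : ℝ,
      deriv (fun τ => v₁ τ x) t
        = m / 2 * deriv (deriv (fun y => v₁ t y)) x
          + m * (deriv g (x - ν * t) / g (x - ν * t)) * deriv (fun y => v₁ t y) x)
    (v : ℝ → ℝ → ℝ) (hv : ∀ t x, v t x = g (x - ν * t) * v₁ t x) :
    ∀ t ∈ I, ∀ x : ℝ,
      DifferentiableAt ℝ (fun τ => v τ x) t ∧
      (∀ y, DifferentiableAt ℝ (fun y' => v t y') y) ∧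
      DifferentiableAt ℝ (deriv (fun y' => v t y')) x ∧
      deriv (fun τ => v τ x) t
        = m / 2 * deriv (deriv (fun y' => v t y')) x
          + s0 * v t x * (1 - g (x - ν * t)) * (2 * g (x - ν * t) - 1 + α) :=
  tracer_pde_transfer_general m s0 α hm hs0 κ ν hκ hν g hg I v₁ hvt hvx hvxx hpde v hv
end

section
/- Let m > 0, n ∈ ℕ with n ≥ 1, and t ≥ 0. Let R₁ and R₂ be independent Poisson random variables with mean m n² t / 2, and set X = (R₁ − R₂)/n. Then for every a ∈ ℝ, E[exp(a X)] = exp( m n² t (cosh(a/n) − 1) ); and for every a ∈ ℝ with |a| ≤ n, | m n² t (cosh(a/n) − 1) − (1/2) m a² t | ≤ m t |a|³ / n. -/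
/-!
Both `R₁` and `R₂` have law `Po(r)` with `r = m n² t / 2`, whose moment generating function is
`s ↦ exp (r (eˢ - 1))`. By independence the moment generating function of `R₁ - R₂` at `s` is the
product `exp (r (eˢ - 1) + r (e⁻ˢ - 1)) = exp (2 r (cosh s - 1))`, and `X` is `R₁ - R₂` rescaled
by `1 / n`. The error bound comes from the third-order Taylor estimate for `exp` at `±a / n`.
-/

open MeasureTheory ProbabilityTheory Real
open scoped NNReal Nat

namespace ProbabilityTheory

lemma hasLaw_poissonMeasure_of_measure_eq {Ω : Type*} [MeasurableSpace Ω] {μ : Measure Ω}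
    [IsFiniteMeasure μ] {R : Ω → ℕ} (hR : Measurable R) {r : ℝ≥0}
    (hlaw : ∀ j : ℕ, (μ {ω | R ω = j}).toReal = exp (-r) * r ^ j / j !) :
    HasLaw R (poissonMeasure r) μ where
  aemeasurable := hR.aemeasurable
  map_eq := Measure.ext_of_singleton fun j => by
    rw [Measure.map_apply hR (measurableSet_singleton j), poissonMeasure_singleton, ← hlaw j,
      ENNReal.ofReal_toReal (measure_ne_top μ _)]
    rfl

lemma mgf_natCast_poissonMeasure (r : ℝ≥0) (s : ℝ) :
    mgf (Nat.cast : ℕ → ℝ) (poissonMeasure r) s = exp (r * (exp s - 1)) := by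
  rw [mgf, integral_poissonMeasure]
  calc ∑' j : ℕ, (exp (-r) * r ^ j / j !) • exp (s * j)
      = ∑' j : ℕ, exp (-r) * ((r * exp s) ^ j / j !) := by
        refine tsum_congr fun j => ?_
        rw [smul_eq_mul, mul_pow, ← exp_nat_mul]
        ring_nf
    _ = exp (-r) * exp (r * exp s) := by
        rw [tsum_mul_left, (NormedSpace.expSeries_div_hasSum_exp (r * exp s)).tsum_eq,
          exp_eq_exp_ℝ]
    _ = exp (r * (exp s - 1)) := by
        rw [← exp_add]
        ring_nf

lemma HasLaw.mgf_natCast_eq_of_poissonMeasure {Ω : Type*} [MeasurableSpace Ω] {μ : Measure Ω}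
    {R : Ω → ℕ} {r : ℝ≥0} (hR : HasLaw R (poissonMeasure r) μ) (s : ℝ) :
    mgf (fun ω => (R ω : ℝ)) μ s = exp (r * (exp s - 1)) := by
  rw [← mgf_natCast_poissonMeasure r s, ← hR.map_eq, mgf_map hR.aemeasurable .of_discrete]
  rfl

lemma IndepFun.mgf_natCast_sub_of_poissonMeasure {Ω : Type*} [MeasurableSpace Ω] {μ : Measure Ω}
    {R₁ R₂ : Ω → ℕ} {r₁ r₂ : ℝ≥0} (hR₁ : HasLaw R₁ (poissonMeasure r₁) μ)
    (hR₂ : HasLaw R₂ (poissonMeasure r₂) μ) (hindep : IndepFun R₁ R₂ μ) (s : ℝ) :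
    mgf (fun ω => (R₁ ω : ℝ) - R₂ ω) μ s = exp (r₁ * (exp s - 1) + r₂ * (exp (-s) - 1)) := by
  have hsub : (fun ω => (R₁ ω : ℝ) - R₂ ω) = (fun ω => (R₁ ω : ℝ)) + -fun ω => (R₂ ω : ℝ) := by
    ext ω
    simp [sub_eq_add_neg]
  have hindep' : IndepFun (fun ω => (R₁ ω : ℝ)) (-fun ω => (R₂ ω : ℝ)) μ :=
    hindep.comp (measurable_from_top (f := fun j : ℕ => (j : ℝ)))
      (measurable_from_top (f := fun j : ℕ => -(j : ℝ)))
  rw [hsub, hindep'.mgf_add'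
    (measurable_from_top.comp_aemeasurable hR₁.aemeasurable).aestronglyMeasurable
    (measurable_from_top.comp_aemeasurable hR₂.aemeasurable).aestronglyMeasurable.neg,
    mgf_neg, hR₁.mgf_natCast_eq_of_poissonMeasure, hR₂.mgf_natCast_eq_of_poissonMeasure, exp_add]

end ProbabilityTheory

lemma Real.abs_cosh_sub_one_sub_sq_div_two_le {x : ℝ} (hx : |x| ≤ 1) :
    |cosh x - 1 - x ^ 2 / 2| ≤ |x| ^ 3 := by
  have taylor (y : ℝ) (hy : |y| ≤ 1) : |exp y - (1 + y + y ^ 2 / 2)| ≤ |y| ^ 3 * (2 / 9) := by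
    have h := exp_bound hy (n := 3) (by norm_num)
    norm_num [Finset.sum_range_succ, Nat.factorial] at h
    exact h
  have hpos := taylor x hx
  have hneg := taylor (-x) (by rwa [abs_neg])
  rw [abs_neg] at hneg
  have hsplit : cosh x - 1 - x ^ 2 / 2
      = ((exp x - (1 + x + x ^ 2 / 2)) + (exp (-x) - (1 + -x + (-x) ^ 2 / 2))) / 2 := by
    rw [cosh_eq]
    ring
  rw [hsplit, abs_div, abs_two]
  have := abs_add_le (exp x - (1 + x + x ^ 2 / 2)) (exp (-x) - (1 + -x + (-x) ^ 2 / 2))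
  linarith [pow_nonneg (abs_nonneg x) 3]

lemma Real.abs_sq_mul_cosh_div_sub_one_sub_le {N a : ℝ} (hN : 0 < N) (ha : |a| ≤ N) :
    |N ^ 2 * (cosh (a / N) - 1) - a ^ 2 / 2| ≤ |a| ^ 3 / N := by
  have hx : |a / N| ≤ 1 := by rwa [abs_div, abs_of_pos hN, div_le_one hN]
  calc |N ^ 2 * (cosh (a / N) - 1) - a ^ 2 / 2|
      = N ^ 2 * |cosh (a / N) - 1 - (a / N) ^ 2 / 2| := by
        rw [← abs_of_pos (pow_pos hN 2), ← abs_mul, abs_of_pos (pow_pos hN 2)]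
        congr 1
        field_simp
    _ ≤ N ^ 2 * |a / N| ^ 3 := by gcongr; exact abs_cosh_sub_one_sub_sq_div_two_le hx
    _ = |a| ^ 3 / N := by
        rw [abs_div, abs_of_pos hN]
        field_simp

theorem skellam_mgf
    (m : ℝ) (hm : 0 < m) (n : ℕ) (hn : 1 ≤ n) (t : ℝ) (ht : 0 ≤ t)
    {Ω : Type*} [MeasurableSpace Ω] (μ : Measure Ω) [IsProbabilityMeasure μ]
    (R₁ R₂ : Ω → ℕ) (hR₁ : Measurable R₁) (hR₂ : Measurable R₂)
    (hIndep : ProbabilityTheory.IndepFun R₁ R₂ μ)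
    (hlaw₁ : ∀ j : ℕ, (μ {ω | R₁ ω = j}).toReal
      = Real.exp (-(m * n ^ 2 * t / 2)) * (m * n ^ 2 * t / 2) ^ j / (j.factorial : ℝ))
    (hlaw₂ : ∀ j : ℕ, (μ {ω | R₂ ω = j}).toReal
      = Real.exp (-(m * n ^ 2 * t / 2)) * (m * n ^ 2 * t / 2) ^ j / (j.factorial : ℝ))
    (X : Ω → ℝ) (hX : ∀ ω, X ω = ((R₁ ω : ℝ) - (R₂ ω : ℝ)) / n) :
    ∀ a : ℝ,
      (∫ ω, Real.exp (a * X ω) ∂μ)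
          = Real.exp (m * n ^ 2 * t * (Real.cosh (a / n) - 1)) ∧
      (|a| ≤ n →
        |m * n ^ 2 * t * (Real.cosh (a / n) - 1) - 1 / 2 * m * a ^ 2 * t|
          ≤ m * t * |a| ^ 3 / n) := by
  intro a
  constructor
  · let r : ℝ≥0 := ⟨m * n ^ 2 * t / 2, by positivity⟩
    have hr : (r : ℝ) = m * n ^ 2 * t / 2 := rfl
    have hPo₁ : HasLaw R₁ (poissonMeasure r) μ := hasLaw_poissonMeasure_of_measure_eq hR₁ hlaw₁
    have hPo₂ : HasLaw R₂ (poissonMeasure r) μ := hasLaw_poissonMeasure_of_measure_eq hR₂ hlaw₂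
    have hX' : X = fun ω => (n : ℝ)⁻¹ * ((R₁ ω : ℝ) - R₂ ω) :=
      funext fun ω => by rw [hX, div_eq_inv_mul]
    calc ∫ ω, exp (a * X ω) ∂μ
        = mgf (fun ω => (R₁ ω : ℝ) - R₂ ω) μ (a / n) := by
          rw [← inv_mul_eq_div, ← mgf_const_mul, ← hX']
          rfl
      _ = exp (r * (exp (a / n) - 1) + r * (exp (-(a / n)) - 1)) :=
          hIndep.mgf_natCast_sub_of_poissonMeasure hPo₁ hPo₂ _
      _ = exp (m * n ^ 2 * t * (cosh (a / n) - 1)) := by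
          rw [hr, cosh_eq]
          congr 1
          ring
  · intro ha
    have hnpos : (0 : ℝ) < n := by exact_mod_cast hn
    calc |m * n ^ 2 * t * (cosh (a / n) - 1) - 1 / 2 * m * a ^ 2 * t|
        = m * t * |(n : ℝ) ^ 2 * (cosh (a / n) - 1) - a ^ 2 / 2| := by
          rw [← abs_of_nonneg (by positivity : 0 ≤ m * t), ← abs_mul]
          congr 1
          ring
      _ ≤ m * t * (|a| ^ 3 / n) := by
          gcongr
          exact abs_sq_mul_cosh_div_sub_one_sub_le hnpos ha
      _ = m * t * |a| ^ 3 / n := by ring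
end

section
/- Let m > 0, s0 > 0, α ∈ (0,1), f(u) = u(1 − u)(2u − 1 + α), and n ∈ ℕ with n ≥ 1. Suppose U₁, U₂ : [0,∞) × ℤ → [0,1] are semi-discrete solutions, i.e. for every k ∈ ℤ and i ∈ {1,2} the map t ↦ U_i(t,k) is differentiable with ∂_t U_i(t,k) = (m/2) n² (U_i(t,k+1) − 2 U_i(t,k) + U_i(t,k−1)) + s0 f(U_i(t,k)) for all t ≥ 0. Then for every t ≥ 0, sup_{k ∈ ℤ} |U₁(t,k) − U₂(t,k)| ≤ exp((1 + α) s0 t) · sup_{k ∈ ℤ} |U₁(0,k) − U₂(0,k)|. -/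
/-!
Set `w = U₁ - U₂` and `c = m n² / 2`. Each `w(·, k)` solves
`w' = c (w(k+1) - 2 w(k) + w(k-1)) + s0 (f(U₁) - f(U₂))`, and `f` is `(1 + α)`-Lipschitz on
`[0, 1]`. Multiplying by `exp (2 c t)` removes the diagonal term `-2 c w(k)`, so the derivative of
`exp (2 c t) w(t, k)` is bounded by `(2 c + (1 + α) s0) exp (2 c t) Φ(t)`, where
`Φ(t) = sup_k |w(t, k)|`. Integrating and taking the supremum over `k` gives an integral
inequality for `exp (2 c t) Φ(t)`; Gronwall's lemma bounds it by
`Φ(0) exp ((2 c + (1 + α) s0) t)`, and the factor `exp (2 c t)` cancels. The supremum `Φ` is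
Lipschitz, hence integrable, because the derivatives are bounded uniformly in `k`.
-/

open Set Real Topology

/-- `U : ℝ → ℤ → ℝ` (representing a function on `[0,∞) × (1/n)ℤ` via the value `U t k`
at lattice point `k/n`) is a semi-discrete solution of the bistable equation if it takes
values in `[0,1]` and for every lattice point `k` the map `t ↦ U t k` is differentiable
on `[0,∞)` with derivative given by the discrete Laplacian plus reaction term. -/
def IsSemiDiscreteSolution (m s0 : ℝ) (f : ℝ → ℝ) (n : ℕ) (U : ℝ → ℤ → ℝ) : Prop :=
  (∀ t, 0 ≤ t → ∀ k : ℤ, U t k ∈ Set.Icc (0 : ℝ) 1) ∧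
  ∀ k : ℤ, ∀ t, 0 ≤ t →
    HasDerivWithinAt (fun s => U s k)
      (m / 2 * (n : ℝ) ^ 2 * (U t (k + 1) - 2 * U t k + U t (k - 1)) + s0 * f (U t k))
      (Set.Ici 0) t

theorem hasDerivWithinAt_integral_Ici_of_continuousOn {φ : ℝ → ℝ} {a b x : ℝ}
    (hφ : ContinuousOn φ (Icc a b)) (hx : x ∈ Ico a b) :
    HasDerivWithinAt (fun y => ∫ s in a..y, φ s) (φ x) (Ici x) x := by
  have hIcc : Icc a b ∈ 𝓝[>] x := Filter.mem_of_superset (Ioo_mem_nhdsGT hx.2)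
    (Ioo_subset_Icc_self.trans (Icc_subset_Icc_left hx.1))
  refine intervalIntegral.integral_hasDerivWithinAt_right ?_ ?_ ?_
  · exact (hφ.mono (uIcc_of_le hx.1 ▸ Icc_subset_Icc_right hx.2.le)).intervalIntegrable
  · exact (hφ.stronglyMeasurableAtFilter_nhdsWithin measurableSet_Icc x).filter_mono
      (nhdsWithin_le_of_mem hIcc)
  · exact (hφ x (Ico_subset_Icc_self hx)).mono_of_mem_nhdsWithin hIcc

theorem continuousOn_primitive_of_continuousOn {φ : ℝ → ℝ} {a b : ℝ}
    (hφ : ContinuousOn φ (Icc a b)) : ContinuousOn (fun x => ∫ s in a..x, φ s) (Icc a b) := by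
  rcases le_or_gt a b with hab | hba
  · rw [← uIcc_of_le hab] at hφ ⊢
    exact intervalIntegral.continuousOn_primitive_interval' hφ.intervalIntegrable left_mem_uIcc
  · simp [Icc_eq_empty_of_lt hba]

theorem le_mul_exp_of_le_add_integral {ψ : ℝ → ℝ} {a b δ K : ℝ} (hK : 0 ≤ K)
    (hψ : ContinuousOn ψ (Icc a b)) (h : ∀ x ∈ Icc a b, ψ x ≤ δ + ∫ s in a..x, K * ψ s) :
    ∀ x ∈ Icc a b, ψ x ≤ δ * exp (K * (x - a)) := by
  set G : ℝ → ℝ := fun x => δ + ∫ s in a..x, K * ψ s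
  have hKψ : ContinuousOn (fun s => K * ψ s) (Icc a b) := continuousOn_const.mul hψ
  have hG : ∀ x ∈ Ico a b, HasDerivWithinAt G (K * ψ x) (Ici x) x := fun x hx =>
    (hasDerivWithinAt_integral_Ici_of_continuousOn hKψ hx).const_add δ
  have hGcont : ContinuousOn G (Icc a b) :=
    continuousOn_const.add (continuousOn_primitive_of_continuousOn hKψ)
  intro x hx
  refine (h x hx).trans ?_
  rw [← gronwallBound_ε0]
  refine le_gronwallBound_of_liminf_deriv_right_le hGcont
    (fun y hy r hr => (hG y hy).liminf_right_slope_le hr) (by simp [G]) (fun y hy => ?_) x hx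
  rw [add_zero]
  exact mul_le_mul_of_nonneg_left (h y (Ico_subset_Icc_self hy)) hK

theorem abs_ciSup_sub_ciSup_le {ι : Type*} [Nonempty ι] {u v : ι → ℝ} {d : ℝ}
    (hu : BddAbove (range u)) (hv : BddAbove (range v)) (h : ∀ i, |u i - v i| ≤ d) :
    |(⨆ i, u i) - ⨆ i, v i| ≤ d := by
  rw [abs_sub_le_iff, sub_le_iff_le_add, sub_le_iff_le_add]
  exact ⟨ciSup_le fun i => by linarith [le_ciSup hv i, (abs_le.mp (h i)).2],
    ciSup_le fun i => by linarith [le_ciSup hu i, (abs_le.mp (h i)).1]⟩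

def discreteLaplacian (v : ℤ → ℝ) (k : ℤ) : ℝ := v (k + 1) - 2 * v k + v (k - 1)

theorem abs_discreteLaplacian_le {v : ℤ → ℝ} {M : ℝ} (hv : ∀ k, |v k| ≤ M) (k : ℤ) :
    |discreteLaplacian v k| ≤ 4 * M := by
  unfold discreteLaplacian
  have := hv (k + 1); have := hv k; have := hv (k - 1)
  rw [abs_le] at *
  constructor <;> linarith

section LatticeEquation

variable {w g : ℝ → ℤ → ℝ} {c L M : ℝ}

theorem continuousOn_iSup_abs_of_hasDerivWithinAt (hc : 0 ≤ c) (hL : 0 ≤ L)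
    (hM : ∀ t, 0 ≤ t → ∀ k, |w t k| ≤ M)
    (hw : ∀ k t, 0 ≤ t →
      HasDerivWithinAt (fun s => w s k) (c * discreteLaplacian (w t) k + g t k) (Ici 0) t)
    (hg : ∀ t, 0 ≤ t → ∀ k, |g t k| ≤ L * |w t k|) :
    ContinuousOn (fun t => ⨆ k, |w t k|) (Ici 0) := by
  have hbdd : ∀ t ∈ Ici (0 : ℝ), BddAbove (range fun k => |w t k|) := fun t ht =>
    ⟨M, forall_mem_range.mpr (hM t ht)⟩
  have hderiv : ∀ k, ∀ t ∈ Ici (0 : ℝ),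
      ‖c * discreteLaplacian (w t) k + g t k‖ ≤ (4 * c + L) * M := fun k t ht =>
    calc ‖c * discreteLaplacian (w t) k + g t k‖
        ≤ c * |discreteLaplacian (w t) k| + L * |w t k| := by
          rw [Real.norm_eq_abs]
          refine (abs_add_le _ _).trans (add_le_add ?_ (hg t ht k))
          rw [abs_mul, abs_of_nonneg hc]
      _ ≤ c * (4 * M) + L * M := by
          gcongr
          exacts [abs_discreteLaplacian_le (hM t ht) k, hM t ht k]
      _ = (4 * c + L) * M := by ring
  refine (LipschitzOnWith.of_dist_le_mul (K := ((4 * c + L) * M).toNNReal)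
    fun x hx y hy => ?_).continuousOn
  rw [Real.dist_eq, Real.dist_eq, coe_toNNReal']
  refine abs_ciSup_sub_ciSup_le (hbdd x hx) (hbdd y hy) fun k =>
    (abs_abs_sub_abs_le_abs_sub _ _).trans ?_
  refine ((convex_Ici 0).norm_image_sub_le_of_norm_hasDerivWithin_le
    (fun t ht => hw k t ht) (hderiv k) hy hx).trans ?_
  rw [Real.norm_eq_abs]
  gcongr
  exact le_max_left _ _

theorem hasDerivWithinAt_exp_mul_of_hasDerivWithinAt {k : ℤ} {t : ℝ}
    (hw : HasDerivWithinAt (fun s => w s k) (c * discreteLaplacian (w t) k + g t k) (Ici 0) t) :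
    HasDerivWithinAt (fun s => exp (2 * c * s) * w s k)
      (exp (2 * c * t) * (c * (w t (k + 1) + w t (k - 1)) + g t k)) (Ici 0) t := by
  have hexp : HasDerivAt (fun s => exp (2 * c * s)) (exp (2 * c * t) * (2 * c)) t := by
    simpa using ((hasDerivAt_id t).const_mul (2 * c)).exp
  refine (hexp.hasDerivWithinAt.mul hw).congr_deriv ?_
  unfold discreteLaplacian
  ring

theorem exp_mul_abs_le_add_integral (hc : 0 ≤ c) (hL : 0 ≤ L)
    (hM : ∀ t, 0 ≤ t → ∀ k, |w t k| ≤ M)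
    (hw : ∀ k t, 0 ≤ t →
      HasDerivWithinAt (fun s => w s k) (c * discreteLaplacian (w t) k + g t k) (Ici 0) t)
    (hg : ∀ t, 0 ≤ t → ∀ k, |g t k| ≤ L * |w t k|) {t : ℝ} (ht : 0 ≤ t) (k : ℤ) :
    exp (2 * c * t) * |w t k| ≤ (⨆ k, |w 0 k|) +
      ∫ s in 0..t, (2 * c + L) * (exp (2 * c * s) * ⨆ k, |w s k|) := by
  set Φ : ℝ → ℝ := fun t => ⨆ k, |w t k|
  have hle : ∀ s, 0 ≤ s → ∀ j, |w s j| ≤ Φ s := fun s hs j =>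
    le_ciSup ⟨M, forall_mem_range.mpr (hM s hs)⟩ j
  have hψ : ContinuousOn (fun s => (2 * c + L) * (exp (2 * c * s) * Φ s)) (Icc 0 t) :=
    (continuousOn_const.mul ((continuous_exp.comp (continuous_const_mul _)).continuousOn.mul
      (continuousOn_iSup_abs_of_hasDerivWithinAt hc hL hM hw hg))).mono Icc_subset_Ici_self
  have h := image_norm_le_of_norm_deriv_right_le_deriv_boundary'
    (f := fun s => exp (2 * c * s) * w s k) (a := 0) (b := t) ?_
    (fun s hs => (hasDerivWithinAt_exp_mul_of_hasDerivWithinAt (hw k s hs.1)).mono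
      (Ici_subset_Ici.mpr hs.1))
    (B := fun x => Φ 0 + ∫ s in 0..x, (2 * c + L) * (exp (2 * c * s) * Φ s)) ?_ ?_
    (fun s hs => (hasDerivWithinAt_integral_Ici_of_continuousOn hψ hs).const_add _) ?_
    ⟨ht, le_rfl⟩
  · simpa [abs_mul] using h
  · exact (continuous_exp.comp (continuous_const_mul _)).continuousOn.mul
      (fun s hs => (hw k s hs.1).continuousWithinAt.mono Icc_subset_Ici_self)
  · simpa using hle 0 le_rfl k
  · exact continuousOn_const.add (continuousOn_primitive_of_continuousOn hψ)
  · intro s hs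
    have hs0 : 0 ≤ s := hs.1
    have hreact : |c * (w s (k + 1) + w s (k - 1)) + g s k| ≤ (2 * c + L) * Φ s :=
      calc |c * (w s (k + 1) + w s (k - 1)) + g s k|
          ≤ c * (|w s (k + 1)| + |w s (k - 1)|) + L * |w s k| := by
            refine (abs_add_le _ _).trans (add_le_add ?_ (hg s hs0 k))
            rw [abs_mul, abs_of_nonneg hc]
            gcongr
            exact abs_add_le _ _
        _ ≤ c * (Φ s + Φ s) + L * Φ s := by
            gcongr <;> exact hle s hs0 _
        _ = (2 * c + L) * Φ s := by ring
    rw [Real.norm_eq_abs, abs_mul, abs_of_pos (exp_pos _)]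
    calc exp (2 * c * s) * |c * (w s (k + 1) + w s (k - 1)) + g s k|
        ≤ exp (2 * c * s) * ((2 * c + L) * Φ s) := by gcongr
      _ = _ := by ring

theorem iSup_abs_le_exp_mul_iSup_abs (hc : 0 ≤ c) (hL : 0 ≤ L)
    (hM : ∀ t, 0 ≤ t → ∀ k, |w t k| ≤ M)
    (hw : ∀ k t, 0 ≤ t →
      HasDerivWithinAt (fun s => w s k) (c * discreteLaplacian (w t) k + g t k) (Ici 0) t)
    (hg : ∀ t, 0 ≤ t → ∀ k, |g t k| ≤ L * |w t k|) {t : ℝ} (ht : 0 ≤ t) :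
    ⨆ k, |w t k| ≤ exp (L * t) * ⨆ k, |w 0 k| := by
  set Φ : ℝ → ℝ := fun t => ⨆ k, |w t k|
  have hψ : ContinuousOn (fun s => exp (2 * c * s) * Φ s) (Icc 0 t) :=
    ((continuous_exp.comp (continuous_const_mul _)).continuousOn.mul
      (continuousOn_iSup_abs_of_hasDerivWithinAt hc hL hM hw hg)).mono Icc_subset_Ici_self
  have hweighted : ∀ s ∈ Icc 0 t,
      exp (2 * c * s) * Φ s ≤ Φ 0 + ∫ r in 0..s, (2 * c + L) * (exp (2 * c * r) * Φ r) :=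
    fun s hs => by
      rw [mul_comm, ← le_div_iff₀ (exp_pos _)]
      refine ciSup_le fun k => ?_
      rw [le_div_iff₀ (exp_pos _), mul_comm]
      exact exp_mul_abs_le_add_integral hc hL hM hw hg hs.1 k
  have hgronwall := le_mul_exp_of_le_add_integral (by positivity) hψ hweighted t ⟨ht, le_rfl⟩
  rw [sub_zero, add_mul, exp_add] at hgronwall
  exact le_of_mul_le_mul_left (hgronwall.trans_eq (by ring)) (exp_pos _)

end LatticeEquation

theorem abs_bistable_sub_le {α u v : ℝ} (hα : 0 ≤ α) (hu : u ∈ Icc (0 : ℝ) 1)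
    (hv : v ∈ Icc (0 : ℝ) 1) :
    |u * (1 - u) * (2 * u - 1 + α) - v * (1 - v) * (2 * v - 1 + α)| ≤ (1 + α) * |u - v| := by
  obtain ⟨hu0, hu1⟩ := hu
  obtain ⟨hv0, hv1⟩ := hv
  -- The second factor is the divided difference of `f`, an average of
  -- `f' w = -6 w² + 2 (3 - α) w + α - 1` over `[u, v]`, and `|f'| ≤ 1 + α` on `[0, 1]`.
  have hfactor : u * (1 - u) * (2 * u - 1 + α) - v * (1 - v) * (2 * v - 1 + α)
      = (u - v) * ((3 - α) * (u + v) - 2 * (u ^ 2 + u * v + v ^ 2) + α - 1) := by ring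
  have hslope : |(3 - α) * (u + v) - 2 * (u ^ 2 + u * v + v ^ 2) + α - 1| ≤ 1 + α := by
    rw [abs_le]
    constructor
    · nlinarith [mul_nonneg hu0 (sub_nonneg.2 hu1), mul_nonneg hv0 (sub_nonneg.2 hv1),
        mul_nonneg (mul_nonneg hα (sub_nonneg.2 hu1)) (sub_nonneg.2 hv1),
        mul_nonneg hu0 (sub_nonneg.2 hv1), mul_nonneg hv0 (sub_nonneg.2 hu1)]
    · nlinarith [sq_nonneg (u - v), sq_nonneg (u + v - 1), mul_nonneg hα (add_nonneg hu0 hv0)]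
  rw [hfactor, abs_mul, mul_comm]
  exact mul_le_mul_of_nonneg_right hslope (abs_nonneg _)

theorem semi_discrete_gronwall_general
    (m s0 α : ℝ) (hm : 0 < m) (hs0 : 0 < s0) (hα : α ∈ Set.Ioo (0 : ℝ) 1)
    (f : ℝ → ℝ) (hf : ∀ u, f u = u * (1 - u) * (2 * u - 1 + α))
    (n : ℕ)
    (U₁ U₂ : ℝ → ℤ → ℝ)
    (hU₁ : IsSemiDiscreteSolution m s0 f n U₁)
    (hU₂ : IsSemiDiscreteSolution m s0 f n U₂) :
    ∀ t, 0 ≤ t →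
      (⨆ k : ℤ, |U₁ t k - U₂ t k|)
        ≤ Real.exp ((1 + α) * s0 * t) * ⨆ k : ℤ, |U₁ 0 k - U₂ 0 k| := by
  obtain ⟨hrange₁, hderiv₁⟩ := hU₁
  obtain ⟨hrange₂, hderiv₂⟩ := hU₂
  intro t ht
  refine iSup_abs_le_exp_mul_iSup_abs (w := fun t k => U₁ t k - U₂ t k)
    (g := fun t k => s0 * (f (U₁ t k) - f (U₂ t k))) (c := m / 2 * n ^ 2) (M := 1)
    (by positivity) (mul_nonneg (by linarith [hα.1]) hs0.le) (fun t ht k => ?_) (fun k t ht => ?_)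
    (fun t ht k => ?_) ht
  · obtain ⟨h₁, h₁'⟩ := hrange₁ t ht k
    obtain ⟨h₂, h₂'⟩ := hrange₂ t ht k
    exact abs_sub_le_of_nonneg_of_le h₁ h₁' h₂ h₂'
  · refine ((hderiv₁ k t ht).sub (hderiv₂ k t ht)).congr_deriv ?_
    unfold discreteLaplacian
    ring
  · calc |s0 * (f (U₁ t k) - f (U₂ t k))|
        = s0 * |f (U₁ t k) - f (U₂ t k)| := by rw [abs_mul, abs_of_pos hs0]
      _ ≤ s0 * ((1 + α) * |U₁ t k - U₂ t k|) := by
          rw [hf, hf]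
          gcongr
          exact abs_bistable_sub_le hα.1.le (hrange₁ t ht k) (hrange₂ t ht k)
      _ = (1 + α) * s0 * |U₁ t k - U₂ t k| := by ring

theorem semi_discrete_gronwall
    (m s0 α : ℝ) (hm : 0 < m) (hs0 : 0 < s0) (hα : α ∈ Set.Ioo (0 : ℝ) 1)
    (f : ℝ → ℝ) (hf : ∀ u, f u = u * (1 - u) * (2 * u - 1 + α))
    (n : ℕ) (hn : 1 ≤ n)
    (U₁ U₂ : ℝ → ℤ → ℝ)
    (hU₁ : IsSemiDiscreteSolution m s0 f n U₁)
    (hU₂ : IsSemiDiscreteSolution m s0 f n U₂) :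
    ∀ t, 0 ≤ t →
      (⨆ k : ℤ, |U₁ t k - U₂ t k|)
        ≤ Real.exp ((1 + α) * s0 * t) * ⨆ k : ℤ, |U₁ 0 k - U₂ 0 k| :=
  semi_discrete_gronwall_general m s0 α hm hs0 hα f hf n U₁ U₂ hU₁ hU₂
end

section
/- Let m > 0, s0 > 0, α ∈ (0,1) and f(u) = u(1 − u)(2u − 1 + α). There exists a constant C₅ < ∞ (depending only on m, s0, α) such that for every n ∈ ℕ with n ≥ 1 and every semi-discrete solution U : [0,∞) × ℤ → [0,1]: sup_{t ≥ 1, k ∈ ℤ} n |U(t,k+1) − U(t,k)| ≤ C₅. -/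
open Set

theorem HasDerivWithinAt.nonneg_of_isMaxOn_Icc {g : ℝ → ℝ} {g' a b t : ℝ}
    (hg : HasDerivWithinAt g g' (Icc a b) t) (hmax : IsMaxOn g (Icc a b) t) (ht : t ∈ Ioc a b) :
    0 ≤ g' := by
  have hcone : a - t ∈ posTangentConeAt (Icc a b) t :=
    sub_mem_posTangentConeAt_of_segment_subset <|
      (convex_Icc a b).segment_subset (Ioc_subset_Icc_self ht) (left_mem_Icc.2 (ht.1.le.trans ht.2))
  have hslope := hmax.localize.hasFDerivWithinAt_nonpos hg.hasFDerivWithinAt hcone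
  simp only [ContinuousLinearMap.toSpanSingleton_apply, smul_eq_mul] at hslope
  nlinarith [ht.1]

theorem exists_forall_le_of_le_outside_finset {X ι : Type*} [TopologicalSpace X] {s : Set X}
    (hs : IsCompact s) {Z : X → ι → ℝ} (hZ : ∀ i, ContinuousOn (Z · i) s) (K : Finset ι)
    {x₀ : X} (hx₀ : x₀ ∈ s) {i₀ : ι} (hi₀ : i₀ ∈ K) (hout : ∀ x ∈ s, ∀ i ∉ K, Z x i ≤ Z x₀ i₀) :
    ∃ x ∈ s, ∃ i, ∀ y ∈ s, ∀ j, Z y j ≤ Z x i := by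
  choose xm hxm hmax using fun i ↦ hs.exists_isMaxOn ⟨x₀, hx₀⟩ (hZ i)
  obtain ⟨i, -, hi⟩ := K.exists_max_image (fun i ↦ Z (xm i) i) ⟨i₀, hi₀⟩
  refine ⟨xm i, hxm i, i, fun y hy j ↦ ?_⟩
  by_cases hj : j ∈ K
  · exact (hmax j hy).trans (hi j hj)
  · exact (hout y hy j hj).trans ((hmax i₀ hx₀).trans (hi i₀ hi₀))

theorem le_of_strict_subsolution {c a b S : ℝ} (hc : 0 ≤ c) {Z Z' : ℝ → ℤ → ℝ}
    (hderiv : ∀ k, ∀ t ∈ Icc a b, HasDerivWithinAt (Z · k) (Z' t k) (Icc a b) t)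
    (hsub : ∀ k, ∀ t ∈ Ioc a b, Z' t k < c * (Z t (k + 1) - 2 * Z t k + Z t (k - 1)))
    (K : Finset ℤ) {k₀ : ℤ} (hk₀ : k₀ ∈ K) (hout : ∀ t ∈ Icc a b, ∀ k ∉ K, Z t k ≤ Z a k₀)
    (hinit : ∀ k, Z a k ≤ S) : ∀ t ∈ Icc a b, ∀ k, Z t k ≤ S := by
  intro t ht k
  have ha : a ∈ Icc a b := left_mem_Icc.2 (ht.1.trans ht.2)
  obtain ⟨t₁, ht₁, k₁, hmax⟩ := exists_forall_le_of_le_outside_finset isCompact_Icc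
    (fun k ↦ fun s hs ↦ (hderiv k s hs).continuousWithinAt) K ha hk₀ hout
  rcases ht₁.1.eq_or_lt with rfl | hlt
  · exact (hmax t ht k).trans (hinit k₁)
  · have hderiv_nonneg : 0 ≤ Z' t₁ k₁ :=
      (hderiv k₁ t₁ ht₁).nonneg_of_isMaxOn_Icc (fun s hs ↦ hmax s hs k₁) ⟨hlt, ht₁.2⟩
    have hlap_nonpos : c * (Z t₁ (k₁ + 1) - 2 * Z t₁ k₁ + Z t₁ (k₁ - 1)) ≤ 0 :=
      mul_nonpos_of_nonneg_of_nonpos hc (by linarith [hmax t₁ ht₁ (k₁ + 1), hmax t₁ ht₁ (k₁ - 1)])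
    linarith [hsub k₁ t₁ ⟨hlt, ht₁.2⟩]

theorem le_of_subsolution {c a b B S : ℝ} (hc : 0 ≤ c) {Y Y' : ℝ → ℤ → ℝ}
    (hbdd : ∀ t ∈ Icc a b, ∀ k, Y t k ≤ B)
    (hderiv : ∀ k, ∀ t ∈ Icc a b, HasDerivWithinAt (Y · k) (Y' t k) (Icc a b) t)
    (hsub : ∀ k, ∀ t ∈ Ioc a b, Y' t k ≤ c * (Y t (k + 1) - 2 * Y t k + Y t (k - 1)))
    (hinit : ∀ k, Y a k ≤ S) : ∀ t ∈ Icc a b, ∀ k, Y t k ≤ S := by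
  intro t ht k
  -- `Y - ε (1 + k² + (2c + 1)(t - a))` is a strict subsolution whose maximum sits at finitely
  -- many `k`
  have hpen : ∀ ε > 0, Y t k ≤ S + ε * (1 + k ^ 2 + (2 * c + 1) * (t - a)) := by
    intro ε hε
    obtain ⟨N, hN⟩ := exists_nat_ge ((B - Y a 0) / ε)
    have hfar : ∀ j ∉ Finset.Icc (-N : ℤ) N, (N : ℝ) + 1 ≤ (j : ℝ) ^ 2 := by
      intro j hj
      rw [Finset.mem_Icc, not_and_or, not_le, not_le] at hj
      exact_mod_cast (by rcases hj with hj | hj <;> nlinarith : (N : ℤ) + 1 ≤ j ^ 2)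
    have hZ := le_of_strict_subsolution hc (S := S)
      (Z := fun t k ↦ Y t k - ε * (1 + k ^ 2 + (2 * c + 1) * (t - a)))
      (Z' := fun t k ↦ Y' t k - ε * (2 * c + 1)) ?_ ?_ (Finset.Icc (-N : ℤ) N) (k₀ := 0)
      (by simp) ?_ ?_ t ht k
    · linarith
    · intro j s hs
      have hw : HasDerivWithinAt (fun s ↦ ε * (1 + (j : ℝ) ^ 2 + (2 * c + 1) * (s - a)))
          (ε * (2 * c + 1)) (Icc a b) s := by
        simpa using (((hasDerivWithinAt_id s _).sub_const a).const_mul (2 * c + 1)).const_add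
          (1 + (j : ℝ) ^ 2) |>.const_mul ε
      exact (hderiv j s hs).sub hw
    · intro j s hs
      push_cast
      linarith [hsub j s hs]
    · intro s hs j hj
      have hdrift : 0 ≤ (2 * c + 1) * (s - a) := mul_nonneg (by linarith) (by linarith [hs.1])
      push_cast
      nlinarith [hbdd s hs j, hfar j hj, (div_le_iff₀ hε).1 hN]
    · intro j
      simp only [sub_self, mul_zero, add_zero]
      nlinarith [hinit j, sq_nonneg (j : ℝ)]
  have hD : 0 < 1 + (k : ℝ) ^ 2 + (2 * c + 1) * (t - a) := by
    have hdrift : 0 ≤ (2 * c + 1) * (t - a) := mul_nonneg (by linarith) (by linarith [ht.1])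
    positivity
  refine le_of_forall_pos_le_add fun ε hε ↦ ?_
  simpa [div_mul_cancel₀ _ hD.ne'] using hpen (ε / _) (div_pos hε hD)

theorem bistable_sub_mul_sub_le {α : ℝ} (hα₀ : 0 ≤ α) (hα₁ : α ≤ 1) {f : ℝ → ℝ}
    (hf : ∀ u, f u = u * (1 - u) * (2 * u - 1 + α)) {u v : ℝ} (hu : u ∈ Icc (0 : ℝ) 1)
    (hv : v ∈ Icc (0 : ℝ) 1) : (u - v) * (f u - f v) ≤ 7 * (u - v) ^ 2 := by
  obtain ⟨hu₀, hu₁⟩ := hu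
  obtain ⟨hv₀, hv₁⟩ := hv
  have hfactor : (u - v) * (f u - f v)
      = (u - v) ^ 2 * (-2 * (u ^ 2 + u * v + v ^ 2) + (3 - α) * (u + v) + (α - 1)) := by
    rw [hf, hf]; ring
  have hslope : -2 * (u ^ 2 + u * v + v ^ 2) + (3 - α) * (u + v) + (α - 1) ≤ 7 := by
    nlinarith [mul_nonneg hu₀ hv₀]
  rw [hfactor]
  nlinarith [mul_le_mul_of_nonneg_left hslope (sq_nonneg (u - v))]

theorem mul_bistable_le {α : ℝ} (hα₁ : α ≤ 1) {f : ℝ → ℝ}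
    (hf : ∀ u, f u = u * (1 - u) * (2 * u - 1 + α)) {u : ℝ} (hu : u ∈ Icc (0 : ℝ) 1) :
    u * f u ≤ 2 := by
  obtain ⟨hu₀, hu₁⟩ := hu
  have hw : 0 ≤ u * u * (1 - u) := mul_nonneg (mul_nonneg hu₀ hu₀) (by linarith)
  have hw₁ : u * u * (1 - u) ≤ 1 := by nlinarith [mul_nonneg hu₀ hu₀]
  rw [hf]
  nlinarith [mul_le_mul_of_nonneg_left (by linarith : 2 * u - 1 + α ≤ 2) hw]

theorem bernsteinFn_rate_le {c κ s₀ τ p q r s fq fr : ℝ} (hc : 0 ≤ c) (hs₀ : 0 ≤ s₀)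
    (hκ₀ : 0 ≤ κ) (hκ : 1 + 14 * s₀ ≤ c * κ) (hτ₀ : 0 ≤ τ) (hτ₁ : τ ≤ 1)
    (hlip : (q - r) * (fq - fr) ≤ 7 * (q - r) ^ 2) (hfr : r * fr ≤ 2) :
    (q - r) ^ 2
        + τ * (2 * (q - r) * ((c * (p - 2 * q + r) + s₀ * fq) - (c * (q - 2 * r + s) + s₀ * fr)))
        + κ * (2 * r * (c * (q - 2 * r + s) + s₀ * fr)) - 4 * κ * s₀
      ≤ c * ((τ * (p - q) ^ 2 + κ * q ^ 2) - 2 * (τ * (q - r) ^ 2 + κ * r ^ 2)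
        + (τ * (r - s) ^ 2 + κ * s ^ 2)) := by
  have hgrad : 2 * (q - r) * ((c * (p - 2 * q + r) + s₀ * fq) - (c * (q - 2 * r + s) + s₀ * fr))
      ≤ c * ((p - q) ^ 2 - 2 * (q - r) ^ 2 + (r - s) ^ 2) + 14 * s₀ * (q - r) ^ 2 := by
    nlinarith [mul_nonneg hc (sq_nonneg (p - 2 * q + r)), mul_nonneg hc (sq_nonneg (q - 2 * r + s)),
      mul_le_mul_of_nonneg_left hlip hs₀]
  have hval : 2 * r * (c * (q - 2 * r + s) + s₀ * fr)
      ≤ c * (q ^ 2 - 2 * r ^ 2 + s ^ 2) - c * (q - r) ^ 2 + 4 * s₀ := by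
    nlinarith [mul_nonneg hc (sq_nonneg (r - s)), mul_le_mul_of_nonneg_left hfr hs₀]
  have hτgrad : τ * (14 * s₀ * (q - r) ^ 2) ≤ 14 * s₀ * (q - r) ^ 2 :=
    mul_le_of_le_one_left (by positivity) hτ₁
  linarith [mul_le_mul_of_nonneg_left hgrad hτ₀, mul_le_mul_of_nonneg_left hval hκ₀,
    mul_le_mul_of_nonneg_right hκ (sq_nonneg (q - r))]

def bernsteinFn (κ s₀ a : ℝ) (U : ℝ → ℤ → ℝ) (t : ℝ) (k : ℤ) : ℝ :=
  (t - a) * (U t (k + 1) - U t k) ^ 2 + κ * U t k ^ 2 - 4 * κ * s₀ * (t - a)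

theorem hasDerivWithinAt_bernsteinFn {κ s₀ a t v w : ℝ} {s : Set ℝ} {U : ℝ → ℤ → ℝ} {k : ℤ}
    (hv : HasDerivWithinAt (U · k) v s t) (hw : HasDerivWithinAt (U · (k + 1)) w s t) :
    HasDerivWithinAt (bernsteinFn κ s₀ a U · k)
      ((U t (k + 1) - U t k) ^ 2 + (t - a) * (2 * (U t (k + 1) - U t k) * (w - v))
        + κ * (2 * U t k * v) - 4 * κ * s₀) s t := by
  have hτ : HasDerivWithinAt (fun s ↦ s - a) 1 s t := (hasDerivWithinAt_id t s).sub_const a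
  refine (((hτ.mul ((hw.sub hv).pow 2)).add ((hv.pow 2).const_mul κ)).sub
    (hτ.const_mul (4 * κ * s₀))).congr_deriv ?_
  simp only [Pi.pow_apply, Pi.sub_apply]
  push_cast
  ring

theorem sq_sub_le_of_bernsteinFn_le {κ s₀ t : ℝ} {U : ℝ → ℤ → ℝ} {k : ℤ} (hκ : 0 ≤ κ)
    (h : bernsteinFn κ s₀ (t - 1) U t k ≤ κ) : (U t (k + 1) - U t k) ^ 2 ≤ κ * (1 + 4 * s₀) := by
  simp only [bernsteinFn, sub_sub_cancel, one_mul, mul_one] at h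
  nlinarith [mul_nonneg hκ (sq_nonneg (U t k))]

namespace IsSemiDiscreteSolution

variable {m s0 α : ℝ} {f : ℝ → ℝ} {n : ℕ} {U : ℝ → ℤ → ℝ}

theorem bernsteinFn_le (hU : IsSemiDiscreteSolution m s0 f n U) (hs0 : 0 ≤ s0) {κ a b : ℝ}
    (hκ : 0 ≤ κ) (ha : 0 ≤ a) (hb : b ≤ a + 1) :
    ∀ t ∈ Icc a b, ∀ k, bernsteinFn κ s0 a U t k ≤ 1 + κ := by
  intro t ht k
  obtain ⟨hq₀, hq₁⟩ := hU.1 t (ha.trans ht.1) (k + 1)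
  obtain ⟨hr₀, hr₁⟩ := hU.1 t (ha.trans ht.1) k
  have hτ₀ : 0 ≤ t - a := by linarith [ht.1]
  have hD : (t - a) * (U t (k + 1) - U t k) ^ 2 ≤ 1 :=
    mul_le_one₀ (by linarith [ht.2]) (sq_nonneg _) (by nlinarith)
  have hval : κ * U t k ^ 2 ≤ κ := mul_le_of_le_one_right hκ (by nlinarith)
  unfold bernsteinFn
  nlinarith [mul_nonneg (mul_nonneg hκ hs0) hτ₀]

theorem bernsteinFn_left_le (hU : IsSemiDiscreteSolution m s0 f n U) {κ a : ℝ} (hκ : 0 ≤ κ)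
    (ha : 0 ≤ a) (k : ℤ) : bernsteinFn κ s0 a U a k ≤ κ := by
  obtain ⟨hr₀, hr₁⟩ := hU.1 a ha k
  simpa [bernsteinFn] using mul_le_of_le_one_right hκ (by nlinarith : U a k ^ 2 ≤ 1)

theorem exists_bernsteinFn_subsolution (hU : IsSemiDiscreteSolution m s0 f n U)
    (hα₀ : 0 ≤ α) (hα₁ : α ≤ 1) (hf : ∀ u, f u = u * (1 - u) * (2 * u - 1 + α))
    (hm : 0 ≤ m) (hs0 : 0 ≤ s0) {κ a b : ℝ} (hκ₀ : 0 ≤ κ) (hκ : 1 + 14 * s0 ≤ m / 2 * n ^ 2 * κ)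
    (ha : 0 ≤ a) (hb : b ≤ a + 1) :
    ∃ Y' : ℝ → ℤ → ℝ,
      (∀ k, ∀ t ∈ Icc a b, HasDerivWithinAt (bernsteinFn κ s0 a U · k) (Y' t k) (Icc a b) t) ∧
      ∀ k, ∀ t ∈ Ioc a b, Y' t k ≤ m / 2 * n ^ 2 *
        (bernsteinFn κ s0 a U t (k + 1) - 2 * bernsteinFn κ s0 a U t k
          + bernsteinFn κ s0 a U t (k - 1)) := by
  set V : ℝ → ℤ → ℝ := fun t k ↦
    m / 2 * (n : ℝ) ^ 2 * (U t (k + 1) - 2 * U t k + U t (k - 1)) + s0 * f (U t k)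
  have hV : ∀ k, ∀ t ∈ Icc a b, HasDerivWithinAt (U · k) (V t k) (Icc a b) t := fun k t ht ↦
    (hU.2 k t (ha.trans ht.1)).mono fun s hs ↦ ha.trans hs.1
  refine ⟨fun t k ↦ (U t (k + 1) - U t k) ^ 2 + (t - a) * (2 * (U t (k + 1) - U t k)
      * (V t (k + 1) - V t k)) + κ * (2 * U t k * V t k) - 4 * κ * s0,
    fun k t ht ↦ hasDerivWithinAt_bernsteinFn (hV k t ht) (hV (k + 1) t ht), fun k t ht ↦ ?_⟩
  have hU₀ : ∀ j, U t j ∈ Icc (0 : ℝ) 1 := hU.1 t (ha.trans ht.1.le)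
  have hrate := bernsteinFn_rate_le (τ := t - a) (p := U t (k + 1 + 1)) (s := U t (k - 1))
    (by positivity) hs0 hκ₀ hκ (by linarith [ht.1]) (by linarith [ht.2])
    (bistable_sub_mul_sub_le hα₀ hα₁ hf (hU₀ (k + 1)) (hU₀ k)) (mul_bistable_le hα₁ hf (hU₀ k))
  simp only [V, bernsteinFn, add_sub_cancel_right, sub_add_cancel]
  linarith

end IsSemiDiscreteSolution

theorem semi_discrete_gradient_bound
    (m s0 α : ℝ) (hm : 0 < m) (hs0 : 0 < s0) (hα : α ∈ Set.Ioo (0 : ℝ) 1)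
    (f : ℝ → ℝ) (hf : ∀ u, f u = u * (1 - u) * (2 * u - 1 + α)) :
    ∃ C₅ : ℝ, ∀ n : ℕ, 1 ≤ n →
      ∀ U : ℝ → ℤ → ℝ, IsSemiDiscreteSolution m s0 f n U →
      ∀ t : ℝ, 1 ≤ t → ∀ k : ℤ, (n : ℝ) * |U t (k + 1) - U t k| ≤ C₅ := by
  refine ⟨√(2 * (1 + 14 * s0) * (1 + 4 * s0) / m), fun n hn U hU t ht k ↦ ?_⟩
  have hn₀ : (0 : ℝ) < n := by exact_mod_cast hn
  set κ := 2 * (1 + 14 * s0) / (m * n ^ 2) with hκ_def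
  have hκ₀ : 0 ≤ κ := by positivity
  have hκ : m / 2 * n ^ 2 * κ = 1 + 14 * s0 := by rw [hκ_def]; field_simp
  have ha : 0 ≤ t - 1 := by linarith
  obtain ⟨Y', hderiv, hsub⟩ := hU.exists_bernsteinFn_subsolution hα.1.le hα.2.le hf hm.le hs0.le
    hκ₀ hκ.ge ha (b := t) (by linarith)
  have hY := le_of_subsolution (by positivity) (hU.bernsteinFn_le hs0.le hκ₀ ha (by linarith))
    hderiv hsub (hU.bernsteinFn_left_le hκ₀ ha) t ⟨by linarith, le_rfl⟩ k
  have hgrad := sq_sub_le_of_bernsteinFn_le hκ₀ hY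
  rw [← abs_of_pos hn₀, ← abs_mul]
  refine Real.abs_le_sqrt ?_
  calc ((n : ℝ) * (U t (k + 1) - U t k)) ^ 2 = n ^ 2 * (U t (k + 1) - U t k) ^ 2 := by ring
    _ ≤ n ^ 2 * (κ * (1 + 4 * s0)) := by gcongr
    _ = 2 * (1 + 14 * s0) * (1 + 4 * s0) / m := by rw [hκ_def]; field_simp
end

section
/- There exists a constant C < ∞ such that for every λ > 0, Σ_{k ∈ ℤ} |p_λ(k+1) − p_λ(k)| ≤ C λ^{−1/2}, where p_λ : ℤ → [0,1] is the probability mass function p_λ(k) = P(R₁ − R₂ = k) for R₁, R₂ independent Poisson random variables with mean λ. -/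
open Real

private lemma exp_neg_le_inv_sqrt {c x : ℝ} (hc : 0 < c) (hx : 0 < x) :
    Real.exp (-(c * x)) ≤ (Real.sqrt c)⁻¹ * (Real.sqrt x)⁻¹ := by
  have hy : 0 < c * x := mul_pos hc hx
  have h1 : Real.sqrt (c * x) ≤ Real.exp ((c * x) / 2) := by
    have h2 : c * x ≤ Real.exp (c * x) := by linarith [Real.add_one_le_exp (c * x)]
    have h3 : Real.sqrt (c * x) ≤ Real.sqrt (Real.exp (c * x)) := Real.sqrt_le_sqrt h2
    have h4 : Real.sqrt (Real.exp (c * x)) = Real.exp ((c * x) / 2) := by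
      have h5 := Real.sqrt_mul_self (Real.exp_nonneg ((c * x) / 2))
      rw [← Real.exp_add, show (c*x)/2 + (c*x)/2 = c * x by ring] at h5
      exact h5
    rwa [h4] at h3
  have hs : 0 < Real.sqrt (c * x) := Real.sqrt_pos.2 hy
  have key : Real.sqrt (c * x) * Real.exp (-(c * x)) ≤ 1 := by
    calc Real.sqrt (c * x) * Real.exp (-(c * x))
        ≤ Real.exp ((c * x) / 2) * Real.exp (-(c * x)) := by
          apply mul_le_mul_of_nonneg_right h1 (Real.exp_nonneg _)
      _ = Real.exp (-(c * x) / 2) := by rw [← Real.exp_add]; ring_nf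
      _ ≤ 1 := Real.exp_le_one_iff.2 (by linarith)
  have h6 : Real.exp (-(c * x)) ≤ (Real.sqrt (c * x))⁻¹ := by
    rw [show (Real.sqrt (c*x))⁻¹ = 1 / Real.sqrt (c*x) from (one_div _).symm,
      le_div_iff₀ hs]
    linarith [key, mul_comm (Real.sqrt (c*x)) (Real.exp (-(c*x)))]
  rwa [Real.sqrt_mul hc.le, mul_inv] at h6

set_option maxHeartbeats 1000000 in
private lemma pois_bound : ∃ C : ℝ, 0 < C ∧ ∀ lam : ℝ, 0 < lam → ∀ n : ℕ,
    Real.exp (-lam) * lam ^ n / (n.factorial : ℝ) ≤ C * (Real.sqrt lam)⁻¹ := by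
  obtain ⟨a0, ha0, hstir⟩ := Stirling.stirlingSeq'_bounded_by_pos_constant
  set c : ℝ := (1 - Real.log 2) / 2 with hc_def
  have hlog2 : Real.log 2 < 1 := by
    have := Real.log_two_lt_d9; linarith
  have hlog2' : 0 < Real.log 2 := Real.log_pos (by norm_num)
  have hc : 0 < c := by rw [hc_def]; linarith
  refine ⟨(1 + a0⁻¹) * (1 + (Real.sqrt c)⁻¹), by positivity, ?_⟩
  intro lam hl n
  have hsl : 0 < Real.sqrt lam := Real.sqrt_pos.2 hl
  have ha0' : 0 ≤ a0⁻¹ := by positivity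
  have hsc' : 0 ≤ (Real.sqrt c)⁻¹ := by positivity
  have hCb1 : a0⁻¹ ≤ (1 + a0⁻¹) * (1 + (Real.sqrt c)⁻¹) := by nlinarith
  have hCb2 : (Real.sqrt c)⁻¹ ≤ (1 + a0⁻¹) * (1 + (Real.sqrt c)⁻¹) := by nlinarith
  have hCb3 : a0⁻¹ * (Real.sqrt c)⁻¹ ≤ (1 + a0⁻¹) * (1 + (Real.sqrt c)⁻¹) := by nlinarith
  have hexp_c : Real.exp (-(c * lam)) ≤ (Real.sqrt c)⁻¹ * (Real.sqrt lam)⁻¹ :=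
    exp_neg_le_inv_sqrt hc hl
  cases n with
  | zero =>
    simp only [pow_zero, Nat.factorial_zero, Nat.cast_one, mul_one, div_one]
    have hce : Real.exp (-lam) ≤ Real.exp (-(c * lam)) := by
      apply Real.exp_le_exp.2; nlinarith
    calc Real.exp (-lam) ≤ (Real.sqrt c)⁻¹ * (Real.sqrt lam)⁻¹ := le_trans hce hexp_c
      _ ≤ _ := mul_le_mul_of_nonneg_right hCb2 (by positivity)
  | succ m =>
    set n' : ℕ := m + 1 with hn'_def
    have hn1 : (1:ℝ) ≤ (n' : ℝ) := by
      have : (1:ℕ) ≤ n' := by omega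
      exact_mod_cast this
    have hnpos : (0:ℝ) < (n':ℝ) := by linarith
    have hd : (0:ℝ) < Real.sqrt (2 * n') * ((n':ℝ) / Real.exp 1) ^ n' := by positivity
    have hfac : a0 * (Real.sqrt (2 * n') * ((n':ℝ) / Real.exp 1) ^ n') ≤ (n'.factorial : ℝ) := by
      have h := hstir m
      rw [Stirling.stirlingSeq] at h
      rw [le_div_iff₀ hd] at h
      linarith
    have hne : ((n':ℝ) / Real.exp 1) ^ n' ≠ 0 := by positivity
    have e1 : lam ^ n' = Real.exp ((n':ℝ) * Real.log lam) := by
      rw [Real.exp_nat_mul, Real.exp_log hl]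
    have e2 : ((n':ℝ) / Real.exp 1) ^ n' = Real.exp ((n':ℝ) * (Real.log (n':ℝ) - 1)) := by
      rw [Real.exp_nat_mul]
      congr 1
      rw [Real.exp_sub, Real.exp_log hnpos]
    set g : ℝ := (n':ℝ) * Real.log lam - lam - (n':ℝ) * (Real.log (n':ℝ) - 1) with hg_def
    have E' : Real.exp (-lam) * lam ^ n' = Real.exp g * ((n':ℝ) / Real.exp 1) ^ n' := by
      rw [e1, e2, ← Real.exp_add, hg_def, ← Real.exp_add]
      congr 1
      ring
    have hmid : Real.exp (-lam) * lam ^ n' / (n'.factorial : ℝ)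
        ≤ Real.exp g / (a0 * Real.sqrt (2 * n')) := by
      have hfacpos : (0:ℝ) < (n'.factorial : ℝ) := by positivity
      calc Real.exp (-lam) * lam ^ n' / (n'.factorial : ℝ)
          ≤ Real.exp (-lam) * lam ^ n' / (a0 * (Real.sqrt (2*n') * ((n':ℝ)/Real.exp 1)^n')) := by
            apply div_le_div_of_nonneg_left (by positivity) (by positivity) hfac
        _ = Real.exp g / (a0 * Real.sqrt (2 * n')) := by
            rw [E', show a0 * (Real.sqrt (2*(n':ℝ)) * ((n':ℝ)/Real.exp 1)^n')
              = (a0 * Real.sqrt (2*(n':ℝ))) * ((n':ℝ)/Real.exp 1)^n' by ring,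
              mul_div_mul_right _ _ hne]
    rcases le_or_gt lam (2 * (n':ℝ)) with hcase | hcase
    · have hlog : Real.log lam - Real.log n' ≤ lam / n' - 1 := by
        have h1 : Real.log (lam / n') ≤ lam / n' - 1 := Real.log_le_sub_one_of_pos (by positivity)
        rwa [Real.log_div hl.ne' hnpos.ne'] at h1
      have hgle : g ≤ 0 := by
        have h2 : (n':ℝ) * (Real.log lam - Real.log n') ≤ (n':ℝ) * (lam / n' - 1) :=
          mul_le_mul_of_nonneg_left hlog hnpos.le
        have h3 : (n':ℝ) * (lam / n') = lam := by field_simp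
        rw [hg_def]
        nlinarith
      have hsqrt : Real.sqrt lam ≤ Real.sqrt (2 * n') := Real.sqrt_le_sqrt (by linarith)
      calc Real.exp (-lam) * lam ^ n' / (n'.factorial : ℝ)
          ≤ Real.exp g / (a0 * Real.sqrt (2 * n')) := hmid
        _ ≤ 1 / (a0 * Real.sqrt lam) := by
            apply div_le_div₀ (by norm_num) (Real.exp_le_one_iff.2 hgle) (by positivity)
            nlinarith
        _ = a0⁻¹ * (Real.sqrt lam)⁻¹ := by rw [one_div, mul_inv]
        _ ≤ _ := mul_le_mul_of_nonneg_right hCb1 (by positivity)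
    · have h2n : Real.log (lam / (2*n')) ≤ lam / (2*n') - 1 :=
        Real.log_le_sub_one_of_pos (by positivity)
      have hsplit : Real.log (lam / (2*(n':ℝ))) = Real.log lam - (Real.log 2 + Real.log n') := by
        rw [Real.log_div hl.ne' (by positivity), Real.log_mul two_ne_zero hnpos.ne']
      have hgle : g ≤ -(c * lam) := by
        have h1 : Real.log lam - Real.log n' ≤ Real.log 2 + lam/(2*n') - 1 := by
          rw [hsplit] at h2n; linarith
        have h2 : (n':ℝ) * (Real.log lam - Real.log n')
            ≤ (n':ℝ) * (Real.log 2 + lam/(2*n') - 1) :=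
          mul_le_mul_of_nonneg_left h1 hnpos.le
        have h3 : (n':ℝ) * (lam / (2*n')) = lam / 2 := by field_simp
        have h4 : (n':ℝ) ≤ lam / 2 := by linarith
        have h5 : (n':ℝ) * Real.log 2 ≤ (lam/2) * Real.log 2 :=
          mul_le_mul_of_nonneg_right h4 hlog2'.le
        rw [hg_def, hc_def]
        have h6 : (n':ℝ) * (Real.log lam - Real.log n')
            ≤ (n':ℝ) * Real.log 2 + lam/2 - n' := by nlinarith
        nlinarith [h6, h5]
      have hs1 : (1:ℝ) ≤ Real.sqrt (2 * n') := by
        rw [show (1:ℝ) = Real.sqrt 1 from (Real.sqrt_one).symm]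
        exact Real.sqrt_le_sqrt (by linarith)
      calc Real.exp (-lam) * lam ^ n' / (n'.factorial : ℝ)
          ≤ Real.exp g / (a0 * Real.sqrt (2 * n')) := hmid
        _ ≤ Real.exp (-(c*lam)) / (a0 * 1) := by
            apply div_le_div₀ (Real.exp_nonneg _) (Real.exp_le_exp.2 hgle) (by positivity)
            nlinarith
        _ = a0⁻¹ * Real.exp (-(c*lam)) := by rw [mul_one, div_eq_mul_inv, mul_comm]
        _ ≤ a0⁻¹ * ((Real.sqrt c)⁻¹ * (Real.sqrt lam)⁻¹) :=
            mul_le_mul_of_nonneg_left hexp_c (by positivity)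
        _ = (a0⁻¹ * (Real.sqrt c)⁻¹) * (Real.sqrt lam)⁻¹ := by ring
        _ ≤ _ := mul_le_mul_of_nonneg_right hCb3 (by positivity)

set_option maxHeartbeats 1000000 in
theorem skellam_gradient_bound
    (p : ℝ → ℤ → ℝ)
    (hp : ∀ lam : ℝ, 0 < lam → ∀ k : ℤ,
      p lam k = ∑' j : ℕ, ∑' l : ℕ,
        if (j : ℤ) - (l : ℤ) = k then
          (Real.exp (-lam) * lam ^ j / (j.factorial : ℝ))
            * (Real.exp (-lam) * lam ^ l / (l.factorial : ℝ))
        else 0) :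
    ∃ C : ℝ, ∀ lam : ℝ, 0 < lam →
      (∑' k : ℤ, |p lam (k + 1) - p lam k|) ≤ C * lam ^ (-(1 / 2) : ℝ) := by
  obtain ⟨C₁, hC₁pos, hC₁⟩ := pois_bound
  refine ⟨2 * C₁, ?_⟩
  intro lam hl
  have hrp : lam ^ (-(1 / 2) : ℝ) = (Real.sqrt lam)⁻¹ := by
    rw [Real.rpow_neg hl.le, ← Real.sqrt_eq_rpow]
  set a : ℕ → ℝ := fun n => Real.exp (-lam) * lam ^ n / (n.factorial : ℝ) with ha_def
  have ha0 : ∀ n, 0 ≤ a n := fun n => by simp only [ha_def]; positivity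
  have sum_a : Summable a := by
    have h := (Real.summable_pow_div_factorial lam).mul_left (Real.exp (-lam))
    apply h.congr
    intro n
    simp only [ha_def, mul_div_assoc]
  have ta : ∑' n, a n = 1 := by
    have h1 : ∑' n : ℕ, (lam ^ n / (n.factorial : ℝ)) = Real.exp lam := by
      rw [Real.exp_eq_exp_ℝ, NormedSpace.exp_eq_tsum_div]
    calc ∑' n, a n = ∑' n : ℕ, Real.exp (-lam) * (lam ^ n / (n.factorial : ℝ)) :=
          tsum_congr fun n => by simp only [ha_def, mul_div_assoc]
      _ = Real.exp (-lam) * ∑' n : ℕ, (lam ^ n / (n.factorial : ℝ)) := tsum_mul_left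
      _ = 1 := by rw [h1, ← Real.exp_add, neg_add_cancel, Real.exp_zero]
  have ha1 : ∀ n, a n ≤ 1 := by
    intro n
    calc a n ≤ ∑' m, a m := Summable.le_tsum sum_a n fun m _ => ha0 m
      _ = 1 := ta
  have hsumt : ∀ n : ℕ, Summable (fun l : ℕ => a (l + n) * a l) := by
    intro n
    apply Summable.of_nonneg_of_le (fun l => mul_nonneg (ha0 _) (ha0 _))
      (fun l => ?_) sum_a
    calc a (l + n) * a l ≤ 1 * a l := mul_le_mul_of_nonneg_right (ha1 _) (ha0 _)
      _ = a l := one_mul _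
  set P : ℕ → ℝ := fun n => ∑' l : ℕ, a (l + n) * a l with hP_def
  have hPnonneg : ∀ n, 0 ≤ P n := fun n => tsum_nonneg fun l => mul_nonneg (ha0 _) (ha0 _)
  have hrec : ∀ m : ℕ, a (m + 1) = a m * (lam / ((m : ℝ) + 1)) := by
    intro m
    have h0 : ((m.factorial : ℝ)) ≠ 0 := by positivity
    simp only [ha_def]
    rw [pow_succ, Nat.factorial_succ]
    push_cast
    field_simp
  have hPmono : ∀ n : ℕ, P (n + 1) ≤ P n := by
    intro n
    have key : ∀ l : ℕ, 2 * (a (l + (n + 1)) * a l)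
        ≤ a (l + n) * a l + a (l + 1 + n) * a (l + 1) := by
      intro l
      have e0 : l + (n + 1) = (l + n) + 1 := by omega
      have e1 : l + 1 + n = (l + n) + 1 := by omega
      have hq : lam / (((l + n : ℕ) : ℝ) + 1) ≤ lam / (((l : ℕ) : ℝ) + 1) := by
        apply div_le_div_of_nonneg_left hl.le (by positivity)
        push_cast
        linarith
      have h1 : a ((l + n) + 1) * a l ≤ a (l + n) * a (l + 1) := by
        rw [hrec (l + n), hrec l]
        calc a (l + n) * (lam / (((l + n : ℕ) : ℝ) + 1)) * a l
            = (a (l + n) * a l) * (lam / (((l + n : ℕ) : ℝ) + 1)) := by ring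
          _ ≤ (a (l + n) * a l) * (lam / (((l : ℕ) : ℝ) + 1)) :=
              mul_le_mul_of_nonneg_left hq (mul_nonneg (ha0 _) (ha0 _))
          _ = a (l + n) * (a l * (lam / (((l : ℕ) : ℝ) + 1))) := by ring
      have hx0 : 0 ≤ a ((l + n) + 1) * a l := mul_nonneg (ha0 _) (ha0 _)
      have h2 : (a ((l + n) + 1) * a l) * (a ((l + n) + 1) * a l)
          ≤ (a (l + n) * a l) * (a ((l + n) + 1) * a (l + 1)) := by
        calc (a ((l + n) + 1) * a l) * (a ((l + n) + 1) * a l)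
            ≤ (a ((l + n) + 1) * a l) * (a (l + n) * a (l + 1)) :=
              mul_le_mul_of_nonneg_left h1 hx0
          _ = (a (l + n) * a l) * (a ((l + n) + 1) * a (l + 1)) := by ring
      rw [e0, e1]
      nlinarith [h2, hx0, mul_nonneg (ha0 (l + n)) (ha0 l),
        mul_nonneg (ha0 ((l + n) + 1)) (ha0 (l + 1)),
        sq_nonneg (a (l + n) * a l - a ((l + n) + 1) * a (l + 1))]
    have hshift : Summable (fun l : ℕ => a (l + 1 + n) * a (l + 1)) :=
      (summable_nat_add_iff 1).2 (hsumt n)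
    have hsum_rhs : Summable (fun l : ℕ => (a (l + n) * a l + a (l + 1 + n) * a (l + 1)) / 2) :=
      ((hsumt n).add hshift).div_const 2
    have hhalf : ∑' l : ℕ, a (l + 1 + n) * a (l + 1) ≤ P n := by
      have h0 := Summable.tsum_eq_zero_add (hsumt n)
      have h1 : 0 ≤ a (0 + n) * a 0 := mul_nonneg (ha0 _) (ha0 _)
      simp only [hP_def]
      linarith [h0, h1]
    calc P (n + 1) = ∑' l : ℕ, a (l + (n + 1)) * a l := by simp only [hP_def]
      _ ≤ ∑' l : ℕ, (a (l + n) * a l + a (l + 1 + n) * a (l + 1)) / 2 :=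
          Summable.tsum_le_tsum (fun l => by linarith [key l]) (hsumt (n + 1)) hsum_rhs
      _ = (∑' l : ℕ, (a (l + n) * a l + a (l + 1 + n) * a (l + 1))) / 2 := tsum_div_const
      _ = (P n + ∑' l : ℕ, a (l + 1 + n) * a (l + 1)) / 2 := by
          rw [Summable.tsum_add (hsumt n) hshift]
      _ ≤ (P n + P n) / 2 := by linarith [hhalf]
      _ = P n := by ring
  have hp' : ∀ k : ℤ, p lam k = ∑' j : ℕ, ∑' l : ℕ,
      (if (j : ℤ) - (l : ℤ) = k then a j * a l else 0) := by
    intro k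
    exact hp lam hl k
  have hp_eq : ∀ n : ℕ, p lam (n : ℤ) = P n := by
    intro n
    rw [hp' (n : ℤ)]
    have step1 : ∀ j : ℕ, (∑' l : ℕ, if (j : ℤ) - (l : ℤ) = (n : ℤ) then a j * a l else 0)
        = (if n ≤ j then a j * a (j - n) else 0) := by
      intro j
      by_cases h : n ≤ j
      · rw [tsum_eq_single (j - n) (fun l hlne => if_neg (by omega))]
        rw [if_pos (by omega), if_pos h]
      · have hz : ∀ l : ℕ, (if (j : ℤ) - (l : ℤ) = (n : ℤ) then a j * a l else 0) = 0 :=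
          fun l => if_neg (by omega)
        rw [tsum_congr hz, tsum_zero, if_neg h]
    have hinj : Function.Injective (fun l : ℕ => l + n) := add_left_injective n
    have hsupp : Function.support (fun j : ℕ => if n ≤ j then a j * a (j - n) else 0)
        ⊆ Set.range (fun l : ℕ => l + n) := by
      intro j hj
      by_cases h : n ≤ j
      · exact ⟨j - n, by show j - n + n = j; omega⟩
      · simp only [Function.mem_support, if_neg h] at hj
        exact absurd rfl hj
    calc ∑' (j : ℕ) (l : ℕ), (if (j : ℤ) - (l : ℤ) = (n : ℤ) then a j * a l else 0)
        = ∑' j : ℕ, (if n ≤ j then a j * a (j - n) else 0) := tsum_congr step1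
      _ = ∑' l : ℕ, (if n ≤ l + n then a (l + n) * a (l + n - n) else 0) :=
          (Function.Injective.tsum_eq hinj hsupp).symm
      _ = ∑' l : ℕ, a (l + n) * a l := by
          refine tsum_congr fun l => ?_
          rw [if_pos (by omega), Nat.add_sub_cancel]
      _ = P n := by simp only [hP_def]
  have hp_symm : ∀ k : ℤ, p lam (-k) = p lam k := by
    intro k
    have hsum2 : Summable (Function.uncurry (fun j l : ℕ =>
        if (j : ℤ) - (l : ℤ) = -k then a j * a l else 0)) := by
      apply Summable.of_nonneg_of_le ?_ ?_
        (Summable.mul_of_nonneg sum_a sum_a ha0 ha0)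
      · rintro ⟨x, y⟩
        dsimp [Function.uncurry]
        split_ifs
        · exact mul_nonneg (ha0 _) (ha0 _)
        · exact le_rfl
      · rintro ⟨x, y⟩
        dsimp [Function.uncurry]
        split_ifs
        · exact le_rfl
        · exact mul_nonneg (ha0 _) (ha0 _)
    have hcomm := Summable.tsum_comm
      (f := fun j l : ℕ => if (j : ℤ) - (l : ℤ) = -k then a j * a l else 0) hsum2
    rw [hp' (-k), hp' k, ← hcomm]
    exact tsum_congr fun x => tsum_congr fun y => if_congr (by omega) (mul_comm _ _) rfl
  set ι : ℤ → ℕ := fun k => (if 0 ≤ k then k else -k - 1).toNat with hι_def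
  have habs : ∀ k : ℤ, |p lam (k + 1) - p lam k| = P (ι k) - P (ι k + 1) := by
    intro k
    by_cases hk : 0 ≤ k
    · have hιk : ι k = k.toNat := by simp only [hι_def, if_pos hk]
      rw [hιk]
      have e1 : p lam k = P k.toNat := by
        have h := hp_eq k.toNat
        rw [show ((k.toNat : ℕ) : ℤ) = k by omega] at h
        exact h
      have e2 : p lam (k + 1) = P (k.toNat + 1) := by
        have h := hp_eq (k.toNat + 1)
        rw [show (((k.toNat + 1 : ℕ)) : ℤ) = k + 1 by push_cast; omega] at h
        exact h
      rw [e1, e2, abs_sub_comm, abs_of_nonneg (sub_nonneg.2 (hPmono k.toNat))]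
    · have hιk : ι k = (-k - 1).toNat := by simp only [hι_def, if_neg hk]
      rw [hιk]
      set m : ℕ := (-k - 1).toNat with hm_def
      have e1 : p lam k = P (m + 1) := by
        have h := hp_eq (m + 1)
        rw [show (((m + 1 : ℕ)) : ℤ) = -k by push_cast; omega] at h
        rw [← hp_symm k]
        exact h
      have e2 : p lam (k + 1) = P m := by
        have h := hp_eq m
        rw [show ((m : ℕ) : ℤ) = -(k + 1) by push_cast; omega] at h
        rw [← hp_symm (k + 1)]
        exact h
      rw [e1, e2, abs_of_nonneg (sub_nonneg.2 (hPmono m))]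
  have hfin : ∀ t : Finset ℕ, (∑ m ∈ t, (P m - P (m + 1))) ≤ P 0 := by
    intro t
    obtain ⟨nn, hsub⟩ := t.exists_nat_subset_range
    calc ∑ m ∈ t, (P m - P (m + 1))
        ≤ ∑ m ∈ Finset.range nn, (P m - P (m + 1)) :=
          Finset.sum_le_sum_of_subset_of_nonneg hsub
            (fun m _ _ => sub_nonneg.2 (hPmono m))
      _ = P 0 - P nn := Finset.sum_range_sub' P nn
      _ ≤ P 0 := by linarith [hPnonneg nn]
  have hP0 : P 0 ≤ C₁ * (Real.sqrt lam)⁻¹ := by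
    have hb : ∀ l : ℕ, a (l + 0) * a l ≤ (C₁ * (Real.sqrt lam)⁻¹) * a l := by
      intro l
      apply mul_le_mul_of_nonneg_right ?_ (ha0 l)
      have h := hC₁ lam hl (l + 0)
      simpa only [ha_def] using h
    calc P 0 = ∑' l : ℕ, a (l + 0) * a l := by simp only [hP_def]
      _ ≤ ∑' l : ℕ, (C₁ * (Real.sqrt lam)⁻¹) * a l :=
          Summable.tsum_le_tsum hb (hsumt 0) (sum_a.mul_left _)
      _ = (C₁ * (Real.sqrt lam)⁻¹) * ∑' l, a l := tsum_mul_left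
      _ = C₁ * (Real.sqrt lam)⁻¹ := by rw [ta, mul_one]
  rw [hrp]
  apply tsum_le_of_sum_le' (by positivity)
  intro s
  have hbound : ∀ u : Finset ℤ,
      (∀ x ∈ u, ∀ y ∈ u, ι x = ι y → x = y) →
      ∑ k ∈ u, (P (ι k) - P (ι k + 1)) ≤ P 0 := by
    intro u hinj
    rw [← Finset.sum_image (s := u) (g := ι) (f := fun m => P m - P (m + 1)) hinj]
    exact hfin _
  have hinjpos : ∀ x ∈ s.filter (fun k => 0 ≤ k), ∀ y ∈ s.filter (fun k => 0 ≤ k),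
      ι x = ι y → x = y := by
    intro x hx y hy hxy
    rw [Finset.mem_filter] at hx hy
    simp only [hι_def, if_pos hx.2, if_pos hy.2] at hxy
    omega
  have hinjneg : ∀ x ∈ s.filter (fun k => ¬ 0 ≤ k), ∀ y ∈ s.filter (fun k => ¬ 0 ≤ k),
      ι x = ι y → x = y := by
    intro x hx y hy hxy
    rw [Finset.mem_filter] at hx hy
    simp only [hι_def, if_neg hx.2, if_neg hy.2] at hxy
    omega
  calc ∑ k ∈ s, |p lam (k + 1) - p lam k|
      = ∑ k ∈ s, (P (ι k) - P (ι k + 1)) := Finset.sum_congr rfl fun k _ => habs k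
    _ = (∑ k ∈ s.filter (fun k => 0 ≤ k), (P (ι k) - P (ι k + 1)))
        + ∑ k ∈ s.filter (fun k => ¬ 0 ≤ k), (P (ι k) - P (ι k + 1)) :=
          (Finset.sum_filter_add_sum_filter_not s _ _).symm
    _ ≤ P 0 + P 0 := add_le_add (hbound _ hinjpos) (hbound _ hinjneg)
    _ ≤ C₁ * (Real.sqrt lam)⁻¹ + C₁ * (Real.sqrt lam)⁻¹ := add_le_add hP0 hP0
    _ = 2 * C₁ * (Real.sqrt lam)⁻¹ := by ring
end
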